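/- arXiv:math/0607143 — 10 statements merged into one kernel-verified Lean document; each statement's English description precedes it below -/
import Mathlib

section
/- If f: X → Y is a quasi-isometry between proper metric spaces (i.e., there exist λ > 0, C ≥ 0 with (1/λ)d(x,y) - C ≤ d(f(x),f(y)) ≤ λd(x,y) + C, and every point of Y is within distance D of f(X)), then for every controlled set E of the sublinear coarse structure on X, the set (f×f)(E) is a controlled set of the sublinear coarse structure on Y. -/
/-- `E ⊆ X × X` is a controlled set of the sublinear coarse structure on the
metric space `X` with basepoint `x0`: it is proper (the image and preimage of a
relatively compact = bounded set are bounded), and the displacements in both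
directions are sublinear in the norm `‖x‖ = dist x x0`. -/
def SubControlled {X : Type*} [MetricSpace X] (x0 : X) (E : Set (X × X)) : Prop :=
  (∀ K : Set X, Bornology.IsBounded K →
      Bornology.IsBounded {y | ∃ x ∈ K, (y, x) ∈ E} ∧
      Bornology.IsBounded {y | ∃ x ∈ K, (x, y) ∈ E}) ∧
  (∀ ε : ℝ, 0 < ε → ∃ r : ℝ, ∀ x y : X, r ≤ dist x x0 → (y, x) ∈ E →
      dist y x ≤ ε * dist x x0) ∧
  (∀ ε : ℝ, 0 < ε → ∃ r : ℝ, ∀ x y : X, r ≤ dist x x0 → (x, y) ∈ E →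
      dist x y ≤ ε * dist x x0)


private lemma subQI_aux {lam C ε N n d df : ℝ} (hlam : 0 < lam) (hC : 0 ≤ C) (hε : 0 < ε)
    (hq2 : (1 / lam) * n - C ≤ N) (hrB : C + 2 * C / ε ≤ N)
    (hd : d ≤ ε / (2 * lam ^ 2) * n) (hf : df ≤ lam * d + C) (hn : 0 ≤ n) :
    df ≤ ε * N := by
  have hnn : n ≤ lam * (N + C) := by
    have h1 := mul_le_mul_of_nonneg_left hq2 hlam.le
    have hl : lam * (1 / lam) = 1 := by field_simp
    nlinarith
  have h5 : df ≤ ε / (2 * lam) * n + C := by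
    have he : lam * (ε / (2 * lam ^ 2) * n) = ε / (2 * lam) * n := by
      field_simp
    nlinarith
  have h7 : ε / (2 * lam) * n ≤ ε / (2 * lam) * (lam * (N + C)) :=
    mul_le_mul_of_nonneg_left hnn (by positivity)
  have h8 : ε / (2 * lam) * (lam * (N + C)) = ε / 2 * N + ε / 2 * C := by
    field_simp
  have h9 : ε / 2 * C + C ≤ ε / 2 * N := by
    have h10 := mul_le_mul_of_nonneg_left hrB (half_pos hε).le
    have hx : ε / 2 * (C + 2 * C / ε) = ε / 2 * C + C := by field_simp
    linarith
  linarith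

/-- If `f : X → Y` is a quasi-isometry between proper metric spaces, then the
image under `f × f` of any controlled set of the sublinear coarse structure on
`X` (basepoint `x0`) is a controlled set of the sublinear coarse structure on
`Y` (basepoint `f x0`). -/
theorem quasiIsometry_image_subControlled
    {X Y : Type*} [MetricSpace X] [ProperSpace X] [MetricSpace Y] [ProperSpace Y]
    (f : X → Y) (x0 : X) (lam C D : ℝ) (hlam : 0 < lam) (hC : 0 ≤ C) (hD : 0 ≤ D)
    (hqi : ∀ x y : X,
      (1 / lam) * dist x y - C ≤ dist (f x) (f y) ∧ dist (f x) (f y) ≤ lam * dist x y + C)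
    (hdense : ∀ y : Y, ∃ x : X, dist y (f x) ≤ D)
    (E : Set (X × X)) (hE : SubControlled x0 E) :
    SubControlled (f x0) (Prod.map f f '' E) := by
  obtain ⟨hprop, hleft, hright⟩ := hE
  refine ⟨?_, ?_, ?_⟩
  · intro K hK
    obtain ⟨M, hM⟩ := hK.subset_closedBall (f x0)
    obtain ⟨h1, h2⟩ := hprop (Metric.closedBall x0 (lam * (M + C)))
      Metric.isBounded_closedBall
    obtain ⟨R1, hR1⟩ := h1.subset_closedBall x0
    obtain ⟨R2, hR2⟩ := h2.subset_closedBall x0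
    have key : ∀ b : X, f b ∈ K → b ∈ Metric.closedBall x0 (lam * (M + C)) := by
      intro b hb
      have hfb := hM hb
      simp only [Metric.mem_closedBall] at hfb ⊢
      have h := (hqi b x0).1
      have heq : dist b x0 = lam * (1 / lam * dist b x0) := by field_simp
      have h2 : lam * (1 / lam * dist b x0) ≤ lam * (dist (f b) (f x0) + C) :=
        mul_le_mul_of_nonneg_left (by linarith) hlam.le
      nlinarith [(dist_nonneg : (0:ℝ) ≤ dist (f b) (f x0))]
    constructor
    · refine (Metric.isBounded_closedBall (x := f x0) (r := lam * R1 + C)).subset ?_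
      rintro y' ⟨x', hx', ⟨a, b⟩, hab, heq⟩
      injection heq with e1 e2
      subst e1; subst e2
      have hb : b ∈ Metric.closedBall x0 (lam * (M + C)) := key b hx'
      have ha : dist a x0 ≤ R1 := hR1 ⟨b, hb, hab⟩
      have h := (hqi a x0).2
      simp only [Metric.mem_closedBall]
      nlinarith
    · refine (Metric.isBounded_closedBall (x := f x0) (r := lam * R2 + C)).subset ?_
      rintro y' ⟨x', hx', ⟨a, b⟩, hab, heq⟩
      injection heq with e1 e2
      subst e1; subst e2
      have ha : a ∈ Metric.closedBall x0 (lam * (M + C)) := key a hx'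
      have hb : dist b x0 ≤ R2 := hR2 ⟨a, ha, hab⟩
      have h := (hqi b x0).2
      simp only [Metric.mem_closedBall]
      nlinarith
  · intro ε hε
    obtain ⟨r1, hr1⟩ := hleft (ε / (2 * lam ^ 2)) (by positivity)
    refine ⟨max (lam * r1 + C) (C + 2 * C / ε), ?_⟩
    rintro x' y' hr ⟨⟨a, b⟩, hab, heq⟩
    injection heq with e1 e2
    subst e1; subst e2
    have hrA : lam * r1 + C ≤ dist (f b) (f x0) := le_trans (le_max_left _ _) hr
    have hrB : C + 2 * C / ε ≤ dist (f b) (f x0) := le_trans (le_max_right _ _) hr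
    have hq1 := (hqi b x0).2
    have hq2 := (hqi b x0).1
    have hn : r1 ≤ dist b x0 := by nlinarith
    have hd : dist a b ≤ ε / (2 * lam ^ 2) * dist b x0 := hr1 b a hn hab
    have hf := (hqi a b).2
    exact subQI_aux hlam hC hε hq2 hrB hd hf dist_nonneg
  · intro ε hε
    obtain ⟨r1, hr1⟩ := hright (ε / (2 * lam ^ 2)) (by positivity)
    refine ⟨max (lam * r1 + C) (C + 2 * C / ε), ?_⟩
    rintro x' y' hr ⟨⟨a, b⟩, hab, heq⟩
    injection heq with e1 e2
    subst e1; subst e2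
    have hrA : lam * r1 + C ≤ dist (f a) (f x0) := le_trans (le_max_left _ _) hr
    have hrB : C + 2 * C / ε ≤ dist (f a) (f x0) := le_trans (le_max_right _ _) hr
    have hq1 := (hqi a x0).2
    have hq2 := (hqi a x0).1
    have hn : r1 ≤ dist a x0 := by nlinarith
    have hd : dist a b ≤ ε / (2 * lam ^ 2) * dist a x0 := hr1 a b hn hab
    have hf := (hqi a b).2
    exact subQI_aux hlam hC hε hq2 hrB hd hf dist_nonneg
end

section
/- Let A and B be subsets of a metric space X with basepoint x₀, and write ‖x‖ = d(x, x₀) and B_r = {x : ‖x‖ < r}. Then the following are equivalent: (1) there exist C, r₀ > 0 such that max{d(x,A), d(x,B)} ≥ C‖x‖ whenever ‖x‖ ≥ r₀; (2) there exist D, r₁ > 0 such that d(A \ B_r, B \ B_r) ≥ Dr whenever r ≥ r₁. -/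
/-- Lemma 2.4: For subsets `A`, `B` of a metric space `X` with basepoint `x0`
(`‖x‖ = dist x x0`, `B_r` the open ball of radius `r` about `x0`), the following
are equivalent (distances to/between empty sets interpreted as `+∞`, i.e. the
conditions are stated pointwise and hold vacuously):
(1) there are `C, r0 > 0` with `max {d(x,A), d(x,B)} ≥ C‖x‖` whenever `‖x‖ ≥ r0`;
(2) there are `D, r1 > 0` with `d(A \ B_r, B \ B_r) ≥ D r` whenever `r ≥ r1`. -/
theorem maxDist_linear_iff_setDist_linear
    {X : Type*} [MetricSpace X] (x0 : X) (A B : Set X) :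
    (∃ C > (0 : ℝ), ∃ r0 > (0 : ℝ), ∀ x : X, r0 ≤ dist x x0 →
        (∀ a ∈ A, C * dist x x0 ≤ dist x a) ∨ (∀ b ∈ B, C * dist x x0 ≤ dist x b)) ↔
    (∃ D > (0 : ℝ), ∃ r1 > (0 : ℝ), ∀ r : ℝ, r1 ≤ r →
        ∀ a ∈ A, r ≤ dist a x0 → ∀ b ∈ B, r ≤ dist b x0 → D * r ≤ dist a b) := by
  constructor
  · rintro ⟨C, hC, r0, hr0, h⟩
    refine ⟨C, hC, r0, hr0, fun r hr a ha har b hb hbr => ?_⟩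
    have hx : r0 ≤ dist a x0 := le_trans hr har
    rcases h a hx with hA | hB
    · have h1 := hA a ha
      simp only [dist_self] at h1
      have : 0 < C * dist a x0 :=
        mul_pos hC (lt_of_lt_of_le (lt_of_lt_of_le hr0 hr) har)
      linarith
    · have h1 := hB b hb
      have : C * r ≤ C * dist a x0 := by nlinarith
      linarith
  · rintro ⟨D, hD, r1, hr1, h⟩
    refine ⟨D / (D + 2), by positivity, r1 * (D + 2) / 2, by positivity, fun x hx => ?_⟩
    by_contra hcon
    push_neg at hcon
    obtain ⟨⟨a, ha, hda⟩, ⟨b, hb, hdb⟩⟩ := hcon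
    set C : ℝ := D / (D + 2) with hCdef
    have hD2 : (0 : ℝ) < D + 2 := by linarith
    have hC2 : C * (D + 2) = D := by
      rw [hCdef]; field_simp
    have hCpos : 0 < C := by positivity
    have hC1 : C < 1 := by
      rw [hCdef, div_lt_one hD2]; linarith
    have hxpos : 0 < dist x x0 := lt_of_lt_of_le (by positivity) hx
    set r : ℝ := (1 - C) * dist x x0 with hrdef
    have hr1r : r1 ≤ r := by
      rw [hrdef]
      nlinarith [hx]
    have hna : r ≤ dist a x0 := by
      have htri : dist x x0 ≤ dist x a + dist a x0 := dist_triangle x a x0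
      nlinarith
    have hnb : r ≤ dist b x0 := by
      have htri : dist x x0 ≤ dist x b + dist b x0 := dist_triangle x b x0
      nlinarith
    have hkey := h r hr1r a ha hna b hb hnb
    have htri : dist a b ≤ dist x a + dist x b := by
      have := dist_triangle a x b
      rw [dist_comm a x] at this
      exact this
    rw [hrdef] at hkey
    nlinarith
end

section
/- Let A and B be subsets of a proper metric space (X,d) with basepoint x₀, and suppose there is a constant c > 0 such that d(A \ B_r, B \ B_r) ≥ cr for all r ≥ 0. Then the function φ(x) = d(x,A)/(d(x,A) + d(x,B)) satisfies: there exists c_φ > 0 such that |φ(x) - φ(y)|·‖x‖ ≤ c_φ·d(x,y) for all x, y ∈ X. -/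
/-!
Both distance functions are `1`-Lipschitz, which gives
`|φ x - φ y| ≤ d(x,y) / (d(x,A) + d(x,B))`; it remains to bound the denominator below by
`C ‖x‖` with `C = c / (1 + c)`. Write `‖x‖ = (1 + c) r`. If `a ∈ A` and `b ∈ B` were both
closer than `c r` to `x`, they would lie outside `B_r`, so the separation hypothesis would give
`c r ≤ d(a,b) ≤ d(x,a) + d(x,b)`.
-/

open Metric

theorem abs_div_add_sub_div_add_le {a b a' b' δ : ℝ} (ha' : 0 ≤ a') (hb' : 0 ≤ b')
    (hab : 0 < a + b) (hab' : 0 < a' + b') (hδa : |a - a'| ≤ δ) (hδb : |b - b'| ≤ δ) :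
    |a / (a + b) - a' / (a' + b')| ≤ δ / (a + b) := by
  have hnum : |b' * (a - a') + a' * (b' - b)| ≤ (a' + b') * δ :=
    calc |b' * (a - a') + a' * (b' - b)| ≤ b' * |a - a'| + a' * |b' - b| := by
          simpa only [abs_mul, abs_of_nonneg ha', abs_of_nonneg hb'] using
            abs_add_le (b' * (a - a')) (a' * (b' - b))
      _ ≤ b' * δ + a' * δ := by
          rw [abs_sub_comm] at hδb
          gcongr
      _ = (a' + b') * δ := by ring
  rw [div_sub_div _ _ hab.ne' hab'.ne', abs_div, abs_of_pos (mul_pos hab hab'),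
    div_le_div_iff₀ (mul_pos hab hab') hab,
    show a * (a' + b') - (a + b) * a' = b' * (a - a') + a' * (b' - b) by ring]
  calc |b' * (a - a') + a' * (b' - b)| * (a + b)
      ≤ (a' + b') * δ * (a + b) := by gcongr
    _ = δ * ((a + b) * (a' + b')) := by ring

theorem abs_div_add_le_one {a b : ℝ} (ha : 0 ≤ a) (hb : 0 ≤ b) : |a / (a + b)| ≤ 1 := by
  rw [abs_of_nonneg (by positivity)]
  exact div_le_one_of_le₀ (by linarith) (by positivity)

theorem Metric.abs_infDist_sub_infDist_le {X : Type*} [PseudoMetricSpace X] (s : Set X)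
    (x y : X) : |infDist x s - infDist y s| ≤ dist x y := by
  simpa [Real.dist_eq] using (lipschitz_infDist_pt s).dist_le_mul x y

section

variable {X : Type*} [PseudoMetricSpace X]

/-- Where both distances vanish this takes the junk value `0 / 0 = 0`. -/
noncomputable def infDistRatio (A B : Set X) (x : X) : ℝ :=
  infDist x A / (infDist x A + infDist x B)

theorem abs_infDistRatio_le_one (A B : Set X) (x : X) : |infDistRatio A B x| ≤ 1 :=
  abs_div_add_le_one infDist_nonneg infDist_nonneg

theorem abs_infDistRatio_sub_le {A B : Set X} {x y : X}
    (hx : 0 < infDist x A + infDist x B) (hy : 0 < infDist y A + infDist y B) :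
    |infDistRatio A B x - infDistRatio A B y| ≤ dist x y / (infDist x A + infDist x B) :=
  abs_div_add_sub_div_add_le infDist_nonneg infDist_nonneg hx hy
    (abs_infDist_sub_infDist_le A x y) (abs_infDist_sub_infDist_le B x y)

theorem div_one_add_mul_dist_le_dist_add_dist (x0 : X) {A B : Set X} {c : ℝ} (hc : 0 < c)
    (hsep : ∀ r : ℝ, 0 ≤ r → ∀ a ∈ A, r ≤ dist a x0 → ∀ b ∈ B, r ≤ dist b x0 →
      c * r ≤ dist a b)
    (x : X) {a b : X} (ha : a ∈ A) (hb : b ∈ B) :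
    c / (1 + c) * dist x x0 ≤ dist x a + dist x b := by
  set r := dist x x0 / (1 + c)
  have hx : dist x x0 = r + c * r := by simp only [r]; field_simp
  rw [show c / (1 + c) * dist x x0 = c * r by ring]
  by_contra! hnear
  have hfar : ∀ z, dist x z < c * r → r ≤ dist z x0 := fun z hz => by
    linarith [dist_triangle x z x0]
  have hab := hsep r (by positivity) a ha (hfar a (by linarith [dist_nonneg (x := x) (y := b)]))
    b hb (hfar b (by linarith [dist_nonneg (x := x) (y := a)]))
  linarith [dist_triangle_left a b x]

theorem div_one_add_mul_dist_le_infDist_add_infDist (x0 : X) {A B : Set X} (hA : A.Nonempty)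
    (hB : B.Nonempty) {c : ℝ} (hc : 0 < c)
    (hsep : ∀ r : ℝ, 0 ≤ r → ∀ a ∈ A, r ≤ dist a x0 → ∀ b ∈ B, r ≤ dist b x0 →
      c * r ≤ dist a b)
    (x : X) : c / (1 + c) * dist x x0 ≤ infDist x A + infDist x B := by
  have hB' : ∀ a ∈ A, c / (1 + c) * dist x x0 - dist x a ≤ infDist x B := fun a ha =>
    (le_infDist hB).2 fun b hb => by
      linarith [div_one_add_mul_dist_le_dist_add_dist x0 hc hsep x ha hb]
  have hA' : c / (1 + c) * dist x x0 - infDist x B ≤ infDist x A :=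
    (le_infDist hA).2 fun a ha => by linarith [hB' a ha]
  linarith

end

theorem phi_mem_U_general
    {X : Type*} [MetricSpace X] (x0 : X) (A B : Set X)
    (hA : A.Nonempty) (hB : B.Nonempty) (c : ℝ) (hc : 0 < c)
    (hsep : ∀ r : ℝ, 0 ≤ r → ∀ a ∈ A, r ≤ dist a x0 → ∀ b ∈ B, r ≤ dist b x0 →
      c * r ≤ dist a b) :
    ∃ cphi > (0 : ℝ), ∀ x y : X,
      |infDist x A / (infDist x A + infDist x B) -
        infDist y A / (infDist y A + infDist y B)| * dist x x0 ≤ cphi * dist x y := by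
  set C := c / (1 + c)
  have hC : 0 < C := by positivity
  have hC1 : C ≤ 1 := div_le_one_of_le₀ (by linarith) (by positivity)
  have hlow := div_one_add_mul_dist_le_infDist_add_infDist x0 hA hB hc hsep
  have hS (z : X) : 0 ≤ infDist z A + infDist z B := add_nonneg infDist_nonneg infDist_nonneg
  refine ⟨C⁻¹, inv_pos.2 hC, fun x y => ?_⟩
  change |infDistRatio A B x - infDistRatio A B y| * dist x x0 ≤ _
  rcases (hS y).eq_or_lt with hy | hy
  · obtain rfl : y = x0 := dist_le_zero.1 (nonpos_of_mul_nonpos_right (hy ▸ hlow y) hC)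
    have hφ : infDistRatio A B y = 0 := by simp [infDistRatio, ← hy]
    calc |infDistRatio A B x - infDistRatio A B y| * dist x y
        ≤ 1 * dist x y := by
          rw [hφ, sub_zero]
          exact mul_le_mul_of_nonneg_right (abs_infDistRatio_le_one A B x) dist_nonneg
      _ ≤ C⁻¹ * dist x y := by gcongr; exact one_le_inv₀ hC |>.2 hC1
  rcases (hS x).eq_or_lt with hx | hx
  · have : dist x x0 = 0 := le_antisymm
      (nonpos_of_mul_nonpos_right (hx ▸ hlow x) hC) dist_nonneg
    rw [this, mul_zero]
    positivity
  calc |infDistRatio A B x - infDistRatio A B y| * dist x x0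
      ≤ dist x y / (infDist x A + infDist x B) * (C⁻¹ * (infDist x A + infDist x B)) := by
        gcongr
        · exact abs_infDistRatio_sub_le hx hy
        · rw [le_inv_mul_iff₀ hC]; exact hlow x
    _ = C⁻¹ * dist x y := by field_simp

/-- Proposition 2.9: Let `A`, `B` be nonempty subsets of a proper metric space
`X` with basepoint `x0`, and suppose `d(A \ B_r, B \ B_r) ≥ c r` for all `r ≥ 0`
with a constant `c > 0`.  Then `φ(x) = d(x,A) / (d(x,A) + d(x,B))` satisfies
`|φ(x) - φ(y)| ‖x‖ ≤ c_φ d(x,y)` for some constant `c_φ > 0` and all `x, y`. -/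
theorem phi_mem_U
    {X : Type*} [MetricSpace X] [ProperSpace X] (x0 : X) (A B : Set X)
    (hA : A.Nonempty) (hB : B.Nonempty) (c : ℝ) (hc : 0 < c)
    (hsep : ∀ r : ℝ, 0 ≤ r → ∀ a ∈ A, r ≤ dist a x0 → ∀ b ∈ B, r ≤ dist b x0 →
      c * r ≤ dist a b) :
    ∃ cphi > (0 : ℝ), ∀ x y : X,
      |infDist x A / (infDist x A + infDist x B) -
        infDist y A / (infDist y A + infDist y B)| * dist x x0 ≤ cphi * dist x y :=
  phi_mem_U_general x0 A B hA hB c hc hsep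
end

section
/- Let E₁, ..., Eₙ be subsets of a proper metric space (X,d) with basepoint x₀, and suppose there exist c, r₀ > 0 such that max_{1 ≤ i ≤ n} d(x, Eᵢ) ≥ c‖x‖ whenever ‖x‖ ≥ r₀. Then for every controlled set F of the sublinear coarse structure, the intersection ⋂_{i=1}^n F[Eᵢ] is bounded. -/
/-- (Lemma 2.3, (3) ⇒ (2)): If subsets `E₁, …, Eₙ` of a proper metric space `X`
satisfy `max_i d(x, Eᵢ) ≥ c ‖x‖` whenever `‖x‖ ≥ r0` (for some `c, r0 > 0`;
`max_i d(x,Eᵢ) ≥ t` is encoded as: some `i` has all points of `Eᵢ` at distance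
`≥ t` from `x`), then `⋂ i, F[Eᵢ]` is bounded for every controlled set `F` of
the sublinear coarse structure. -/
theorem diverges_of_maxDist_linear
    {X : Type*} [MetricSpace X] [ProperSpace X] (x0 : X) (n : ℕ) (E : Fin n → Set X)
    (c r0 : ℝ) (hc : 0 < c) (hr0 : 0 < r0)
    (h : ∀ x : X, r0 ≤ dist x x0 → ∃ i, ∀ a ∈ E i, c * dist x x0 ≤ dist x a) :
    ∀ F : Set (X × X), SubControlled x0 F →
      Bornology.IsBounded (⋂ i, {x' : X | ∃ x ∈ E i, (x', x) ∈ F}) := by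
  intro F hF
  obtain ⟨hbd, hctrl, -⟩ := hF
  set ε := c / (2 * (1 + c)) with hεdef
  have hεpos : 0 < ε := by positivity
  have hε2 : 2 * ε = c / (1 + c) := by
    rw [hεdef]; field_simp
  have hε2c : 2 * ε < c := by
    rw [hε2]; exact div_lt_self hc (by linarith)
  have hε1 : 2 * ε < 1 := by
    rw [hε2]; rw [div_lt_one (by linarith)]; linarith
  obtain ⟨r, hr⟩ := hctrl ε hεpos
  obtain ⟨hB, -⟩ := hbd (Metric.closedBall x0 r) Metric.isBounded_closedBall
  obtain ⟨R₁, hR₁⟩ := hB.subset_closedBall x0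
  apply Bornology.IsBounded.subset (Metric.isBounded_closedBall (x := x0) (r := max r0 R₁))
  intro x' hx'
  simp only [Set.mem_iInter, Set.mem_setOf_eq] at hx'
  simp only [Metric.mem_closedBall]
  by_cases hx'0 : dist x' x0 < r0
  · exact le_trans hx'0.le (le_max_left _ _)
  push_neg at hx'0
  obtain ⟨i, hi⟩ := h x' hx'0
  obtain ⟨x, hxE, hxF⟩ := hx' i
  by_cases hxr : dist x x0 ≤ r
  · have hmem : x' ∈ Metric.closedBall x0 R₁ :=
      hR₁ ⟨x, Metric.mem_closedBall.mpr hxr, hxF⟩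
    exact le_trans (Metric.mem_closedBall.mp hmem) (le_max_right _ _)
  push_neg at hxr
  exfalso
  have h1 := hr x x' hxr.le hxF
  have h2 : c * dist x' x0 ≤ dist x' x := hi x hxE
  have h3 : dist x x0 ≤ dist x' x0 + dist x' x := by
    rw [dist_comm x' x]
    have := dist_triangle x x' x0
    linarith
  have hD : 0 < dist x' x0 := lt_of_lt_of_le hr0 hx'0
  have h4 : dist x' x ≤ ε * dist x' x0 + ε * dist x' x := by
    have := mul_le_mul_of_nonneg_left h3 hεpos.le
    nlinarith
  have h5 : 2 * ε * dist x' x0 < c * dist x' x0 :=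
    mul_lt_mul_of_pos_right hε2c hD
  have h6 : 0 ≤ (1 - 2 * ε) * dist x' x :=
    mul_nonneg (by linarith) dist_nonneg
  nlinarith
end

section
/- Let E₁, ..., Eₙ be subsets of a proper metric space (X,d) with basepoint x₀, and suppose the system diverges, i.e., ⋂_{i=1}^n F[Eᵢ] is bounded for every controlled set F of the sublinear coarse structure. Then there exist c, r₀ > 0 such that max_{1 ≤ i ≤ n} d(x, Eᵢ) ≥ c‖x‖ whenever ‖x‖ ≥ r₀. -/
/-- (Lemma 2.3, (2) ⇒ (3)): If subsets `E₁, …, Eₙ` of a proper metric space `X`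
form a divergent system, i.e. `⋂ i, F[Eᵢ]` is bounded for every controlled set
`F` of the sublinear coarse structure, then there are `c, r0 > 0` such that
`max_i d(x, Eᵢ) ≥ c ‖x‖` whenever `‖x‖ ≥ r0` (encoded: some `i` has all points
of `Eᵢ` at distance `≥ c‖x‖` from `x`). -/
theorem maxDist_linear_of_diverges
    {X : Type*} [MetricSpace X] [ProperSpace X] (x0 : X) (n : ℕ) (E : Fin n → Set X)
    (h : ∀ F : Set (X × X), SubControlled x0 F →
      Bornology.IsBounded (⋂ i, {x' : X | ∃ x ∈ E i, (x', x) ∈ F})) :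
    ∃ c > (0 : ℝ), ∃ r0 > (0 : ℝ), ∀ x : X, r0 ≤ dist x x0 →
      ∃ i, ∀ a ∈ E i, c * dist x x0 ≤ dist x a := by
  by_contra hcon
  push_neg at hcon
  have key : ∀ k : ℕ, ∃ x : X, ((k:ℝ)+2) ≤ dist x x0 ∧
      ∀ i, ∃ a ∈ E i, dist x a < (1/((k:ℝ)+2)) * dist x x0 := by
    intro k
    have h1 : (0:ℝ) < 1/((k:ℝ)+2) := by positivity
    have h2 : (0:ℝ) < (k:ℝ)+2 := by positivity
    exact hcon _ h1 _ h2
  choose x hx hxa using key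
  choose a ha hd using hxa
  -- basic estimates
  have hk2 : ∀ k : ℕ, (0:ℝ) < (k:ℝ)+2 := fun k => by positivity
  have hDpos : ∀ k : ℕ, (0:ℝ) < dist (x k) x0 := fun k =>
    lt_of_lt_of_le (hk2 k) (hx k)
  have hhalf : ∀ k i, dist (x k) (a k i) ≤ dist (x k) x0 / 2 := by
    intro k i
    have h1 := (hd k i).le
    have h2 : (1/((k:ℝ)+2)) * dist (x k) x0 ≤ dist (x k) x0 / 2 := by
      rw [div_mul_eq_mul_div, one_mul, div_le_div_iff₀ (hk2 k) (by norm_num)]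
      nlinarith [hDpos k, (Nat.cast_nonneg k : (0:ℝ) ≤ k)]
    linarith
  have hlow : ∀ k i, dist (x k) x0 / 2 ≤ dist (a k i) x0 := by
    intro k i
    have := dist_triangle (x k) (a k i) x0
    have h2 := hhalf k i
    have h3 : dist (x k) x0 ≤ dist (x k) (a k i) + dist (a k i) x0 := dist_triangle _ _ _
    linarith
  have hup : ∀ k i, dist (a k i) x0 ≤ 2 * dist (x k) x0 := by
    intro k i
    have h3 : dist (a k i) x0 ≤ dist (a k i) (x k) + dist (x k) x0 := dist_triangle _ _ _
    rw [dist_comm (a k i) (x k)] at h3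
    linarith [hhalf k i, hDpos k]
  -- the controlled set
  set F : Set (X × X) := {p | ∃ k i, p = (x k, a k i)} with hF
  have hFc : SubControlled x0 F := by
    refine ⟨?_, ?_, ?_⟩
    · intro K hK
      obtain ⟨R, hR⟩ := hK.subset_closedBall x0
      constructor
      · apply (Metric.isBounded_closedBall (x := x0) (r := 2*R)).subset
        rintro y ⟨x', hx'K, k, i, heq⟩
        simp only [Prod.mk.injEq] at heq
        obtain ⟨rfl, rfl⟩ := heq
        have hRk : dist (a k i) x0 ≤ R := hR hx'K
        have := hlow k i
        simp only [Metric.mem_closedBall]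
        linarith
      · apply (Metric.isBounded_closedBall (x := x0) (r := 2*R)).subset
        rintro y ⟨x', hx'K, k, i, heq⟩
        simp only [Prod.mk.injEq] at heq
        obtain ⟨rfl, rfl⟩ := heq
        have hRk : dist (x k) x0 ≤ R := hR hx'K
        have := hup k i
        simp only [Metric.mem_closedBall]
        linarith
    · intro ε hε
      obtain ⟨N, hN⟩ := exists_nat_ge (2/ε)
      refine ⟨1 + ∑ k ∈ Finset.range N, ∑ i : Fin n, dist (a k i) x0, ?_⟩
      rintro b y hr ⟨k, i, heq⟩
      simp only [Prod.mk.injEq] at heq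
      obtain ⟨rfl, rfl⟩ := heq
      have hkN : N ≤ k := by
        by_contra hlt
        push_neg at hlt
        have h1 : dist (a k i) x0 ≤ ∑ j : Fin n, dist (a k j) x0 :=
          Finset.single_le_sum (fun j _ => dist_nonneg) (Finset.mem_univ i)
        have h2 : (∑ j : Fin n, dist (a k j) x0) ≤
            ∑ m ∈ Finset.range N, ∑ j : Fin n, dist (a m j) x0 :=
          Finset.single_le_sum
            (fun m _ => Finset.sum_nonneg fun j _ => dist_nonneg)
            (Finset.mem_range.mpr hlt)
        linarith
      have hNk : (N:ℝ) ≤ (k:ℝ) := Nat.cast_le.mpr hkN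
      have h3 : 2 ≤ ε * ((k:ℝ)+2) := by
        have h2e : 2/ε ≤ (k:ℝ)+2 := by linarith
        calc 2 = ε * (2/ε) := by field_simp
        _ ≤ ε * ((k:ℝ)+2) := by
            exact mul_le_mul_of_nonneg_left h2e hε.le
      have h1 : dist (x k) (a k i) ≤ (1/((k:ℝ)+2)) * dist (x k) x0 := (hd k i).le
      have h2 : dist (x k) x0 ≤ 2 * dist (a k i) x0 := by linarith [hlow k i]
      have hk2' := hk2 k
      have h4 : dist (x k) (a k i) * ((k:ℝ)+2) ≤ 2 * dist (a k i) x0 := by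
        have := mul_le_mul_of_nonneg_right h1 (hk2 k).le
        rw [one_div, inv_mul_eq_div, div_mul_cancel₀ _ (hk2 k).ne'] at this
        linarith
      have h5 : 2 * dist (a k i) x0 ≤ ε * ((k:ℝ)+2) * dist (a k i) x0 :=
        mul_le_mul_of_nonneg_right h3 dist_nonneg
      have h6 : dist (x k) (a k i) * ((k:ℝ)+2) ≤ ε * dist (a k i) x0 * ((k:ℝ)+2) := by
        nlinarith
      exact le_of_mul_le_mul_right h6 (hk2 k)
    · intro ε hε
      obtain ⟨N, hN⟩ := exists_nat_ge (1/ε)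
      refine ⟨1 + ∑ k ∈ Finset.range N, dist (x k) x0, ?_⟩
      rintro b y hr ⟨k, i, heq⟩
      simp only [Prod.mk.injEq] at heq
      obtain ⟨rfl, rfl⟩ := heq
      have hkN : N ≤ k := by
        by_contra hlt
        push_neg at hlt
        have h2 : dist (x k) x0 ≤ ∑ m ∈ Finset.range N, dist (x m) x0 :=
          Finset.single_le_sum (fun m _ => dist_nonneg) (Finset.mem_range.mpr hlt)
        linarith
      have hNk : (N:ℝ) ≤ (k:ℝ) := Nat.cast_le.mpr hkN
      have h3 : 1 ≤ ε * ((k:ℝ)+2) := by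
        have h2e : 1/ε ≤ (k:ℝ)+2 := by linarith
        calc 1 = ε * (1/ε) := by field_simp
        _ ≤ ε * ((k:ℝ)+2) := mul_le_mul_of_nonneg_left h2e hε.le
      have h1 : dist (x k) (a k i) ≤ (1/((k:ℝ)+2)) * dist (x k) x0 := (hd k i).le
      have h4 : dist (x k) (a k i) * ((k:ℝ)+2) ≤ dist (x k) x0 := by
        have := mul_le_mul_of_nonneg_right h1 (hk2 k).le
        rw [one_div, inv_mul_eq_div, div_mul_cancel₀ _ (hk2 k).ne'] at this
        linarith
      have h5 : dist (x k) x0 ≤ ε * ((k:ℝ)+2) * dist (x k) x0 := by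
        nlinarith [hDpos k]
      have h6 : dist (x k) (a k i) * ((k:ℝ)+2) ≤ ε * dist (x k) x0 * ((k:ℝ)+2) := by
        nlinarith
      exact le_of_mul_le_mul_right h6 (hk2 k)
  -- contradiction
  obtain ⟨R, hR⟩ := (h F hFc).subset_closedBall x0
  obtain ⟨k, hk⟩ := exists_nat_gt R
  have hmem : x k ∈ ⋂ i, {x' : X | ∃ xx ∈ E i, (x', xx) ∈ F} := by
    simp only [Set.mem_iInter, Set.mem_setOf_eq]
    intro i
    exact ⟨a k i, ha k i, ⟨k, i, rfl⟩⟩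
  have hle : dist (x k) x0 ≤ R := hR hmem
  have := hx k
  linarith
end

section
/- The sublinear coarse structure E_L on a proper metric space X is a coarse structure: it contains the diagonal, and is closed under taking subsets, finite unions, inverses, and compositions. -/
private lemma sub2_comp {X : Type*} [MetricSpace X] (x0 : X) (E F : Set (X × X))
    (hE : ∀ ε : ℝ, 0 < ε → ∃ r : ℝ, ∀ x y : X, r ≤ dist x x0 → (y, x) ∈ E →
      dist y x ≤ ε * dist x x0)
    (hF : ∀ ε : ℝ, 0 < ε → ∃ r : ℝ, ∀ x y : X, r ≤ dist x x0 → (y, x) ∈ F →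
      dist y x ≤ ε * dist x x0) :
    ∀ ε : ℝ, 0 < ε → ∃ r : ℝ, ∀ x y : X, r ≤ dist x x0 →
      (y, x) ∈ {p : X × X | ∃ z : X, (p.1, z) ∈ E ∧ (z, p.2) ∈ F} →
      dist y x ≤ ε * dist x x0 := by
  intro ε hε
  obtain ⟨rF, hrF⟩ := hF (min (ε/2) (1/2)) (by positivity)
  obtain ⟨rE, hrE⟩ := hE (ε/4) (by positivity)
  refine ⟨max rF (max (2*rE) 0), fun x y hx ⟨z, hyz, hzx⟩ => ?_⟩
  have hx0 : (0:ℝ) ≤ dist x x0 := dist_nonneg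
  have h1 : dist z x ≤ min (ε/2) (1/2) * dist x x0 :=
    hrF x z (le_trans (le_max_left _ _) hx) hzx
  have h1' : dist z x ≤ (1/2) * dist x x0 :=
    h1.trans (by nlinarith [min_le_right (ε/2) (1/2)])
  have hz : rE ≤ dist z x0 := by
    have := dist_triangle x z x0
    have h2 : 2*rE ≤ dist x x0 := le_trans (le_trans (le_max_left _ _) (le_max_right _ _)) hx
    have := dist_comm x z
    nlinarith [dist_nonneg (x := z) (y := x0)]
  have h3 : dist y z ≤ (ε/4) * dist z x0 := hrE z y hz hyz
  have hzb : dist z x0 ≤ (3/2) * dist x x0 := by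
    have := dist_triangle z x x0
    nlinarith
  have := dist_triangle y z x
  nlinarith [min_le_left (ε/2) (1/2)]

private lemma sub3_comp {X : Type*} [MetricSpace X] (x0 : X) (E F : Set (X × X))
    (hE : ∀ ε : ℝ, 0 < ε → ∃ r : ℝ, ∀ x y : X, r ≤ dist x x0 → (x, y) ∈ E →
      dist x y ≤ ε * dist x x0)
    (hF : ∀ ε : ℝ, 0 < ε → ∃ r : ℝ, ∀ x y : X, r ≤ dist x x0 → (x, y) ∈ F →
      dist x y ≤ ε * dist x x0) :
    ∀ ε : ℝ, 0 < ε → ∃ r : ℝ, ∀ x y : X, r ≤ dist x x0 →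
      (x, y) ∈ {p : X × X | ∃ z : X, (p.1, z) ∈ E ∧ (z, p.2) ∈ F} →
      dist x y ≤ ε * dist x x0 := by
  intro ε hε
  obtain ⟨rE, hrE⟩ := hE (min (ε/2) (1/2)) (by positivity)
  obtain ⟨rF, hrF⟩ := hF (ε/4) (by positivity)
  refine ⟨max rE (max (2*rF) 0), fun x y hx ⟨z, hxz, hzy⟩ => ?_⟩
  have hx0 : (0:ℝ) ≤ dist x x0 := dist_nonneg
  have h1 : dist x z ≤ min (ε/2) (1/2) * dist x x0 :=
    hrE x z (le_trans (le_max_left _ _) hx) hxz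
  have h1' : dist x z ≤ (1/2) * dist x x0 :=
    h1.trans (by nlinarith [min_le_right (ε/2) (1/2)])
  have hz : rF ≤ dist z x0 := by
    have := dist_triangle x z x0
    have h2 : 2*rF ≤ dist x x0 := le_trans (le_trans (le_max_left _ _) (le_max_right _ _)) hx
    nlinarith [dist_nonneg (x := z) (y := x0)]
  have h3 : dist z y ≤ (ε/4) * dist z x0 := hrF z y hz hzy
  have hzb : dist z x0 ≤ (3/2) * dist x x0 := by
    have := dist_triangle z x x0
    have := dist_comm x z
    nlinarith
  have := dist_triangle x z y
  nlinarith [min_le_left (ε/2) (1/2)]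



/-- The sublinear coarse structure on a proper metric space is a coarse
structure: it contains the diagonal and is closed under subsets, finite
unions, inverses and compositions. -/
theorem subControlled_is_coarse_structure
    {X : Type*} [MetricSpace X] [ProperSpace X] (x0 : X) :
    SubControlled x0 {p : X × X | p.1 = p.2} ∧
    (∀ E F : Set (X × X), SubControlled x0 E → F ⊆ E → SubControlled x0 F) ∧
    (∀ E F : Set (X × X), SubControlled x0 E → SubControlled x0 F →
      SubControlled x0 (E ∪ F)) ∧
    (∀ E : Set (X × X), SubControlled x0 E →
      SubControlled x0 {p : X × X | (p.2, p.1) ∈ E}) ∧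
    (∀ E F : Set (X × X), SubControlled x0 E → SubControlled x0 F →
      SubControlled x0 {p : X × X | ∃ y : X, (p.1, y) ∈ E ∧ (y, p.2) ∈ F}) := by
  refine ⟨⟨?_, ?_, ?_⟩, ?_, ?_, ?_, ?_⟩
  · -- diagonal: properness
    intro K hK
    constructor
    · refine hK.subset fun y ⟨x, hx, hyx⟩ => ?_
      simp only [Set.mem_setOf_eq] at hyx; rwa [hyx]
    · refine hK.subset fun y ⟨x, hx, hxy⟩ => ?_
      simp only [Set.mem_setOf_eq] at hxy; rwa [← hxy]
  · intro ε hε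
    exact ⟨0, fun x y _ h => by
      simp only [Set.mem_setOf_eq] at h; subst h
      simp [mul_nonneg hε.le dist_nonneg]⟩
  · intro ε hε
    exact ⟨0, fun x y _ h => by
      simp only [Set.mem_setOf_eq] at h; subst h
      simp [mul_nonneg hε.le dist_nonneg]⟩
  · -- subsets
    rintro E F ⟨hb, h2, h3⟩ hFE
    refine ⟨fun K hK => ⟨(hb K hK).1.subset ?_, (hb K hK).2.subset ?_⟩,
      fun ε hε => ?_, fun ε hε => ?_⟩
    · rintro y ⟨x, hx, h⟩; exact ⟨x, hx, hFE h⟩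
    · rintro y ⟨x, hx, h⟩; exact ⟨x, hx, hFE h⟩
    · obtain ⟨r, hr⟩ := h2 ε hε
      exact ⟨r, fun x y hx h => hr x y hx (hFE h)⟩
    · obtain ⟨r, hr⟩ := h3 ε hε
      exact ⟨r, fun x y hx h => hr x y hx (hFE h)⟩
  · -- unions
    rintro E F ⟨hbE, hE2, hE3⟩ ⟨hbF, hF2, hF3⟩
    refine ⟨fun K hK => ?_, fun ε hε => ?_, fun ε hε => ?_⟩
    · constructor
      · refine (((hbE K hK).1.union (hbF K hK).1)).subset ?_
        rintro y ⟨x, hx, h | h⟩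
        exacts [Or.inl ⟨x, hx, h⟩, Or.inr ⟨x, hx, h⟩]
      · refine (((hbE K hK).2.union (hbF K hK).2)).subset ?_
        rintro y ⟨x, hx, h | h⟩
        exacts [Or.inl ⟨x, hx, h⟩, Or.inr ⟨x, hx, h⟩]
    · obtain ⟨rE, hrE⟩ := hE2 ε hε
      obtain ⟨rF, hrF⟩ := hF2 ε hε
      refine ⟨max rE rF, fun x y hx h => ?_⟩
      rcases h with h | h
      exacts [hrE x y (le_trans (le_max_left _ _) hx) h,
        hrF x y (le_trans (le_max_right _ _) hx) h]
    · obtain ⟨rE, hrE⟩ := hE3 ε hε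
      obtain ⟨rF, hrF⟩ := hF3 ε hε
      refine ⟨max rE rF, fun x y hx h => ?_⟩
      rcases h with h | h
      exacts [hrE x y (le_trans (le_max_left _ _) hx) h,
        hrF x y (le_trans (le_max_right _ _) hx) h]
  · -- inverses
    rintro E ⟨hb, h2, h3⟩
    refine ⟨fun K hK => ⟨(hb K hK).2.subset ?_, (hb K hK).1.subset ?_⟩,
      fun ε hε => ?_, fun ε hε => ?_⟩
    · rintro y ⟨x, hx, h⟩; exact ⟨x, hx, h⟩
    · rintro y ⟨x, hx, h⟩; exact ⟨x, hx, h⟩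
    · obtain ⟨r, hr⟩ := h3 ε hε
      exact ⟨r, fun x y hx h => by
        have := hr x y hx h
        rwa [dist_comm] at this⟩
    · obtain ⟨r, hr⟩ := h2 ε hε
      exact ⟨r, fun x y hx h => by
        have := hr x y hx h
        rwa [dist_comm] at this⟩
  · -- compositions
    rintro E F ⟨hbE, hE2, hE3⟩ ⟨hbF, hF2, hF3⟩
    refine ⟨fun K hK => ?_, sub2_comp x0 E F hE2 hF2 , sub3_comp x0 E F hE3 hF3⟩
    constructor
    · refine ((hbE {z | ∃ x ∈ K, (z, x) ∈ F} (hbF K hK).1).1).subset ?_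
      rintro y ⟨x, hx, z, hyz, hzx⟩
      exact ⟨z, ⟨x, hx, hzx⟩, hyz⟩
    · refine ((hbF {z | ∃ x ∈ K, (x, z) ∈ E} (hbE K hK).2).2).subset ?_
      rintro y ⟨x, hx, z, hxz, hzy⟩
      exact ⟨z, ⟨x, hx, hxz⟩, hzy⟩
end

section
/- Suppose u, v: X → ℝ are nonnegative functions in U(X,x₀,ℝ) (i.e., bounded, continuous, and satisfying |u(x)-u(y)|·‖x‖ ≤ c_u·d(x,y) and |v(x)-v(y)|·‖x‖ ≤ c_v·d(x,y)), and suppose u(x) + v(x) ≥ δ > 0 for all x ∈ X. Then the function u/(u+v) also belongs to U(X,x₀,ℝ); in fact |u(x)/(u(x)+v(x)) - u(y)/(u(y)+v(y))|·‖x‖ ≤ ((2c_u + c_v)/δ)·d(x,y) for all x,y. -/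
/-- `f ∈ U(X, x0, ℝ)`: `f : X → ℝ` bounded, continuous, with
`|f(x) - f(y)| ‖x‖ ≤ c d(x,y)` for some `c ≥ 0`. -/
def MemUR {X : Type*} [MetricSpace X] (x0 : X) (f : X → ℝ) : Prop :=
  (∃ M : ℝ, ∀ x : X, |f x| ≤ M) ∧ Continuous f ∧
    ∃ c : ℝ, 0 ≤ c ∧ ∀ x y : X, |f x - f y| * dist x x0 ≤ c * dist x y

/-- Proposition 3.5: if `u, v ∈ U(X,x0,ℝ)` are nonnegative with constants
`c_u, c_v` and `u + v ≥ δ > 0`, then `u/(u+v) ∈ U(X,x0,ℝ)`, and in fact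
`|u(x)/(u(x)+v(x)) - u(y)/(u(y)+v(y))| ‖x‖ ≤ ((2c_u + c_v)/δ) d(x,y)`. -/
theorem quotient_memUR
    {X : Type*} [MetricSpace X] (x0 : X) (u v : X → ℝ)
    (hu : MemUR x0 u) (hv : MemUR x0 v)
    (hu0 : ∀ x, 0 ≤ u x) (hv0 : ∀ x, 0 ≤ v x)
    (cu cv : ℝ) (hcu : 0 ≤ cu) (hcv : 0 ≤ cv)
    (hulip : ∀ x y : X, |u x - u y| * dist x x0 ≤ cu * dist x y)
    (hvlip : ∀ x y : X, |v x - v y| * dist x x0 ≤ cv * dist x y)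
    (δ : ℝ) (hδ : 0 < δ) (hsum : ∀ x, δ ≤ u x + v x) :
    MemUR x0 (fun x => u x / (u x + v x)) ∧
    ∀ x y : X, |u x / (u x + v x) - u y / (u y + v y)| * dist x x0 ≤
      ((2 * cu + cv) / δ) * dist x y := by
  have hs : ∀ x, 0 < u x + v x := fun x => lt_of_lt_of_le hδ (hsum x)
  have key : ∀ x y : X, |u x / (u x + v x) - u y / (u y + v y)| * dist x x0 ≤
      ((2 * cu + cv) / δ) * dist x y := by
    intro x y
    have hsx := hs x; have hsy := hs y
    have hne : u x + v x ≠ 0 := ne_of_gt hsx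
    have hne' : u y + v y ≠ 0 := ne_of_gt hsy
    have heq : u x / (u x + v x) - u y / (u y + v y)
        = (u x * (v y - v x) + v x * (u x - u y)) / ((u x + v x) * (u y + v y)) := by
      field_simp; ring
    rw [heq, abs_div, div_mul_eq_mul_div, div_le_iff₀ (by positivity)]
    have hd0 : (0:ℝ) ≤ dist x x0 := dist_nonneg
    have hd : (0:ℝ) ≤ dist x y := dist_nonneg
    have h1 : |u x * (v y - v x) + v x * (u x - u y)| * dist x x0
        ≤ u x * (|v y - v x| * dist x x0) + v x * (|u x - u y| * dist x x0) := by
      calc |u x * (v y - v x) + v x * (u x - u y)| * dist x x0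
          ≤ (|u x * (v y - v x)| + |v x * (u x - u y)|) * dist x x0 :=
            mul_le_mul_of_nonneg_right (abs_add_le _ _) hd0
        _ = u x * (|v y - v x| * dist x x0) + v x * (|u x - u y| * dist x x0) := by
            rw [abs_mul, abs_mul, abs_of_nonneg (hu0 x), abs_of_nonneg (hv0 x)]; ring
    have h2 : u x * (|v y - v x| * dist x x0) ≤ u x * (cv * dist x y) := by
      apply mul_le_mul_of_nonneg_left _ (hu0 x)
      rw [abs_sub_comm]; exact hvlip x y
    have h3 : v x * (|u x - u y| * dist x x0) ≤ v x * (cu * dist x y) :=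
      mul_le_mul_of_nonneg_left (hulip x y) (hv0 x)
    have habs : (0:ℝ) ≤ |u x + v x| := abs_nonneg _
    rw [abs_of_pos (mul_pos hsx hsy)]
    have hc : (2 * cu + cv) / δ * δ = 2 * cu + cv := div_mul_cancel₀ _ (ne_of_gt hδ)
    have hcd : 0 ≤ (2 * cu + cv) / δ := by positivity
    -- |num| * dist x x0 ≤ (u x + v x) * ((cu + cv) * dist x y)
    have h4 : |u x * (v y - v x) + v x * (u x - u y)| * dist x x0
        ≤ (u x + v x) * ((cu + cv) * dist x y) := by nlinarith [h1, h2, h3, mul_nonneg (hv0 x) (mul_nonneg hcv hd), mul_nonneg (hu0 x) (mul_nonneg hcu hd)]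
    have h5 : (u x + v x) * ((cu + cv) * dist x y)
        ≤ (2 * cu + cv) / δ * dist x y * ((u x + v x) * (u y + v y)) := by
      have h6 : (cu + cv) ≤ (2 * cu + cv) / δ * (u y + v y) := by
        nlinarith [hsum y, mul_le_mul_of_nonneg_left (hsum y) hcd]
      nlinarith [mul_le_mul_of_nonneg_left h6 (mul_nonneg (le_of_lt hsx) hd)]
    linarith
  refine ⟨⟨⟨1, fun x => ?_⟩, ?_, ⟨(2 * cu + cv) / δ, by positivity, key⟩⟩, key⟩
  · rw [abs_of_nonneg (div_nonneg (hu0 x) (le_of_lt (hs x)))]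
    exact div_le_one_of_le₀ (le_add_of_nonneg_right (hv0 x)) (le_of_lt (hs x))
  · exact hu.2.1.div (hu.2.1.add hv.2.1) (fun x => ne_of_gt (hs x))
end

section
/- Let X and Y be proper metric spaces with basepoints x₀ ∈ X and suppose g: X → Y satisfies d_Y(g(x),g(y))·‖x‖ ≤ c·d_X(x,y) for all x,y ∈ X. Then for any closed subset F ⊆ Y and any r > 0, the open neighborhood W = g⁻¹(N_r(F)) is a linear neighborhood of A = g⁻¹(F): there is a constant c' > 0 such that d(A \ B_s, (X \ W) \ B_s) ≥ c'·s for all s > 0. -/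
open Metric

/-- Proposition 3.2: if `g : X → Y` satisfies `d(g x, g y) ‖x‖ ≤ c d(x,y)`,
then for any closed `F ⊆ Y` and `r > 0`, `W = g⁻¹(N_r(F))` is a linear
neighborhood of `A = g⁻¹(F)`: there is `c' > 0` such that
`d(A \ B_s, (X \ W) \ B_s) ≥ c' s` for all `s > 0` (stated pointwise). -/
theorem preimage_linear_neighborhood
    {X Y : Type*} [MetricSpace X] [ProperSpace X] [MetricSpace Y] [ProperSpace Y]
    (x0 : X) (g : X → Y) (c : ℝ)
    (hg : ∀ x y : X, dist (g x) (g y) * dist x x0 ≤ c * dist x y)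
    (F : Set Y) (hF : IsClosed F) (r : ℝ) (hr : 0 < r) :
    ∃ c' > (0 : ℝ), ∀ s : ℝ, 0 < s →
      ∀ a : X, g a ∈ F → s ≤ dist a x0 →
      ∀ b : X, r ≤ infDist (g b) F → s ≤ dist b x0 →
      c' * s ≤ dist a b := by
  have hm : (0:ℝ) < max c 1 := lt_of_lt_of_le one_pos (le_max_right _ _)
  refine ⟨r / max c 1, div_pos hr hm, ?_⟩
  intro s hs a ha has b hb hbs
  have h1 : r ≤ dist (g b) (g a) := le_trans hb (Metric.infDist_le_dist_of_mem ha)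
  have h2 : r * s ≤ dist (g a) (g b) * dist a x0 := by
    rw [dist_comm (g a)]
    exact mul_le_mul h1 has hs.le (le_trans hr.le h1)
  have h3 : r * s ≤ max c 1 * dist a b := by
    refine le_trans (le_trans h2 (hg a b)) ?_
    exact mul_le_mul_of_nonneg_right (le_max_left _ _) dist_nonneg
  rw [div_mul_eq_mul_div, div_le_iff₀ hm, mul_comm (dist a b)]
  linarith
end

section
/- Let X be a proper metric space with basepoint x₀ and suppose E₁,...,Eₙ are subsets satisfying: there exist c, r₀ > 0 with max_i d(x,Eᵢ) ≥ c‖x‖ whenever ‖x‖ ≥ r₀. Set Fᵢ = Eᵢ \ B_{r₀+cr₀} and f(x) = Σᵢ d(x,Fᵢ). Then f(x) ≥ min{c, c·r₀/‖x‖ when ‖x‖ ≤ r₀}·‖x‖ in the sense that f(x) ≥ c‖x‖ for all x with ‖x‖ ≥ r₀ and f(x) ≥ c·r₀ for all x with ‖x‖ ≤ r₀; moreover, for gᵢ(x) = d(x,Fᵢ)/f(x) one has |gᵢ(x) - gᵢ(y)|·‖x‖ ≤ ((n+1)/c)·d(x,y) for all x,y with ‖x‖ ≥ r₀. -/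
open Metric

private lemma partition_aux (dx dy fx fy Xd d N c : ℝ) (hN : 0 ≤ N) (hc : 0 < c)
    (hfx : 0 < fx) (hfy : 0 < fy) (hdy0 : 0 ≤ dy) (hdy : dy ≤ fy)
    (hd0 : 0 ≤ d) (h1 : |dx - dy| ≤ d) (h2 : |fx - fy| ≤ N * d)
    (hcX : c * Xd ≤ fx) (hX0 : 0 ≤ Xd) :
    |dx / fx - dy / fy| * Xd ≤ ((N + 1) / c) * d := by
  have key : |dx / fx - dy / fy| ≤ (N + 1) * d / fx := by
    have eq1 : dx / fx - dy / fy = (dx - dy) / fx + dy * (fy - fx) / (fx * fy) := by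
      field_simp; ring
    rw [eq1]
    calc |(dx - dy) / fx + dy * (fy - fx) / (fx * fy)|
        ≤ |(dx - dy) / fx| + |dy * (fy - fx) / (fx * fy)| := abs_add_le _ _
      _ = |dx - dy| / fx + dy * |fy - fx| / (fx * fy) := by
          rw [abs_div, abs_div, abs_mul, abs_mul, abs_of_pos hfx, abs_of_pos hfy,
            abs_of_nonneg hdy0]
      _ ≤ d / fx + fy * (N * d) / (fx * fy) := by
          gcongr
          rw [abs_sub_comm]
          exact h2
      _ = (N + 1) * d / fx := by field_simp; ring
  calc |dx / fx - dy / fy| * Xd ≤ ((N + 1) * d / fx) * Xd :=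
        mul_le_mul_of_nonneg_right key hX0
    _ ≤ ((N + 1) / c) * d := by
        rw [div_mul_eq_mul_div, div_le_iff₀ hfx]
        have heq : (N + 1) / c * d * fx = (N + 1) * d * fx / c := by ring
        rw [heq, le_div_iff₀ hc]
        nlinarith [mul_le_mul_of_nonneg_left hcX (mul_nonneg (by linarith : (0:ℝ) ≤ N + 1) hd0)]

/-- (Part of the proof of Lemma 2.3, (3) ⇒ (1).)  Suppose `E₁,…,Eₙ` (each
unbounded, `n ≥ 1`) satisfy `max_i d(x,Eᵢ) ≥ c‖x‖` for `‖x‖ ≥ r0`.  With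
`Fᵢ = Eᵢ \ B_{r0 + c r0}` and `f(x) = Σᵢ d(x,Fᵢ)` one has `f(x) ≥ c‖x‖` for
`‖x‖ ≥ r0`, `f(x) ≥ c r0` for `‖x‖ ≤ r0`, and the functions
`gᵢ(x) = d(x,Fᵢ)/f(x)` satisfy `|gᵢ(x) - gᵢ(y)| ‖x‖ ≤ ((n+1)/c) d(x,y)` for
all `x, y` with `‖x‖ ≥ r0`. -/
theorem partition_functions_estimates
    {X : Type*} [MetricSpace X] [ProperSpace X] (x0 : X)
    (n : ℕ) (hn : 0 < n) (E : Fin n → Set X)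
    (hEub : ∀ i, ¬ Bornology.IsBounded (E i))
    (c r0 : ℝ) (hc : 0 < c) (hr0 : 0 < r0)
    (h : ∀ x : X, r0 ≤ dist x x0 → ∃ i, ∀ a ∈ E i, c * dist x x0 ≤ dist x a) :
    -- F i = E i \ B_{r0 + c r0}, f x = Σ_i d(x, F i), g i x = d(x, F i)/f x
    let F : Fin n → Set X := fun i => {a ∈ E i | r0 + c * r0 ≤ dist a x0}
    let f : X → ℝ := fun x => ∑ i, infDist x (F i)
    let g : Fin n → X → ℝ := fun i x => infDist x (F i) / f x
    (∀ x : X, r0 ≤ dist x x0 → c * dist x x0 ≤ f x) ∧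
    (∀ x : X, dist x x0 ≤ r0 → c * r0 ≤ f x) ∧
    (∀ i, ∀ x y : X, r0 ≤ dist x x0 →
      |g i x - g i y| * dist x x0 ≤ ((n + 1 : ℝ) / c) * dist x y) := by
  intro F f g
  have hFne : ∀ i, (F i).Nonempty := by
    intro i
    have hb := hEub i
    rw [Metric.isBounded_iff_subset_closedBall x0] at hb
    push_neg at hb
    have hb2 := hb (r0 + c * r0)
    rw [Set.not_subset] at hb2
    obtain ⟨a, ha, hd⟩ := hb2
    rw [Metric.mem_closedBall, not_le] at hd
    exact ⟨a, ha, hd.le⟩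
  have hdnn : ∀ i (x : X), (0:ℝ) ≤ infDist x (F i) := fun i x => infDist_nonneg
  have hlip : ∀ i (x y : X), |infDist x (F i) - infDist y (F i)| ≤ dist x y := by
    intro i x y
    rw [abs_sub_le_iff]
    constructor
    · have := infDist_le_infDist_add_dist (x := x) (y := y) (s := F i)
      linarith
    · have := infDist_le_infDist_add_dist (x := y) (y := x) (s := F i)
      rw [dist_comm y x] at this
      linarith
  -- part 1
  have part1 : ∀ x : X, r0 ≤ dist x x0 → c * dist x x0 ≤ f x := by
    intro x hx
    obtain ⟨i, hi⟩ := h x hx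
    have h1 : c * dist x x0 ≤ infDist x (F i) := by
      by_contra hlt
      rw [not_le, infDist_lt_iff (hFne i)] at hlt
      obtain ⟨a, ha, hda⟩ := hlt
      exact absurd (hi a ha.1) (not_le.mpr hda)
    calc c * dist x x0 ≤ infDist x (F i) := h1
      _ ≤ f x := Finset.single_le_sum (fun j _ => hdnn j x) (Finset.mem_univ i)
  -- part 2
  have part2 : ∀ x : X, dist x x0 ≤ r0 → c * r0 ≤ f x := by
    intro x hx
    have i0 : Fin n := ⟨0, hn⟩
    have h1 : c * r0 ≤ infDist x (F i0) := by
      by_contra hlt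
      rw [not_le, infDist_lt_iff (hFne i0)] at hlt
      obtain ⟨a, ha, hda⟩ := hlt
      have h2 : r0 + c * r0 ≤ dist a x0 := ha.2
      have h3 : dist a x0 ≤ dist a x + dist x x0 := dist_triangle a x x0
      rw [dist_comm x a] at hda
      linarith
    calc c * r0 ≤ infDist x (F i0) := h1
      _ ≤ f x := Finset.single_le_sum (fun j _ => hdnn j x) (Finset.mem_univ i0)
  refine ⟨part1, part2, ?_⟩
  have hfpos : ∀ x : X, 0 < f x := by
    intro x
    rcases le_or_gt (dist x x0) r0 with hx | hx
    · exact lt_of_lt_of_le (by positivity) (part2 x hx)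
    · have : (0:ℝ) < c * dist x x0 := mul_pos hc (hr0.trans hx)
      exact lt_of_lt_of_le this (part1 x hx.le)
  intro i x y hx
  have hX : 0 < dist x x0 := lt_of_lt_of_le hr0 hx
  have hd2 : |f x - f y| ≤ (n : ℝ) * dist x y := by
    have h1 : f x - f y = ∑ j, (infDist x (F j) - infDist y (F j)) := by
      simp only [f, Finset.sum_sub_distrib]
    rw [h1]
    calc |∑ j, (infDist x (F j) - infDist y (F j))|
        ≤ ∑ j, |infDist x (F j) - infDist y (F j)| := Finset.abs_sum_le_sum_abs _ _
      _ ≤ ∑ _j : Fin n, dist x y := Finset.sum_le_sum (fun j _ => hlip j x y)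
      _ = (n : ℝ) * dist x y := by simp [mul_comm]
  have hdyle : infDist y (F i) ≤ f y :=
    Finset.single_le_sum (fun j _ => hdnn j y) (Finset.mem_univ i)
  exact partition_aux (infDist x (F i)) (infDist y (F i)) (f x) (f y)
    (dist x x0) (dist x y) (n : ℝ) c (Nat.cast_nonneg n) hc (hfpos x) (hfpos y) (hdnn i y) hdyle
    dist_nonneg (hlip i x y) hd2 (part1 x hx) dist_nonneg
end

section
/- Let X be the parabolic region {(x,y) ∈ ℝ² : x ≥ 0, |y| ≤ √x} with the Euclidean metric, and let i: [0,∞) → X be i(x) = (x,0). Then i is a coarse equivalence for the sublinear coarse structures; in particular, every point (x,y) ∈ X satisfies d((x,y), i([0,∞))) ≤ √x ≤ √‖(x,y)‖, so the displacement of the retraction (x,y) ↦ (x,0) is sublinear in the norm. -/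
/-- `f : X → Y` is a coarse morphism for the sublinear coarse structures:
it is proper and `f × f` takes controlled sets to controlled sets. -/
def SubCoarseMap {X Y : Type*} [MetricSpace X] [MetricSpace Y]
    (x0 : X) (y0 : Y) (f : X → Y) : Prop :=
  (∀ B : Set Y, Bornology.IsBounded B → Bornology.IsBounded (f ⁻¹' B)) ∧
  ∀ E : Set (X × X), SubControlled x0 E → SubControlled y0 (Prod.map f f '' E)

/-- Two maps are close if the set of pairs of their values is controlled. -/
def SubClose {Z Y : Type*} [MetricSpace Y] (y0 : Y) (h₁ h₂ : Z → Y) : Prop :=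
  SubControlled y0 {p : Y × Y | ∃ z : Z, p = (h₁ z, h₂ z)}

/-- The parabolic region `X = {(x,y) : x ≥ 0, |y| ≤ √x} ⊆ ℝ²` (Euclidean
metric). -/
def Parab : Type :=
  {p : EuclideanSpace ℝ (Fin 2) // 0 ≤ p 0 ∧ |p 1| ≤ Real.sqrt (p 0)}

noncomputable instance : MetricSpace Parab := Subtype.metricSpace

/-- The half line `[0, ∞)`. -/
def Half : Type := {t : ℝ // 0 ≤ t}

noncomputable instance : MetricSpace Half := Subtype.metricSpace

/-- The inclusion `i : [0,∞) → X`, `i(t) = (t, 0)`. -/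
noncomputable def parabIncl (t : Half) : Parab :=
  ⟨(WithLp.equiv 2 (Fin 2 → ℝ)).symm ![t.1, 0],
    by
      constructor
      · simp [t.2]
      · simp [Real.sqrt_nonneg t.1]⟩

/-!
Both the inclusion `i` and the retraction `g (x, y) = x` are Lipschitz and shrink distances
to the basepoint by at most an affine factor, which is all a map needs to be a coarse
morphism of the sublinear coarse structures. Then `g ∘ i = id`, while `i ∘ g` moves `(x, y)`
by `|y| ≤ √x`, and `√` is sublinear.
-/

open Bornology Filter Asymptotics
open scoped NNReal

section SublinearCoarse

variable {X Y : Type*} [MetricSpace X] [MetricSpace Y]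

def SubControlledOneSided (x0 : X) (E : Set (X × X)) : Prop :=
  (∀ K : Set X, IsBounded K → IsBounded {y | ∃ x ∈ K, (y, x) ∈ E}) ∧
  ∀ ε : ℝ, 0 < ε → ∃ r : ℝ, ∀ x y : X, r ≤ dist x x0 → (y, x) ∈ E →
    dist y x ≤ ε * dist x x0

theorem subControlled_iff {x0 : X} {E : Set (X × X)} :
    SubControlled x0 E ↔
      SubControlledOneSided x0 E ∧ SubControlledOneSided x0 (Prod.swap ⁻¹' E) := by
  simp only [SubControlled, SubControlledOneSided, Set.mem_preimage, Prod.swap_prod_mk,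
    dist_comm]
  constructor
  · rintro ⟨hK, h₁, h₂⟩
    exact ⟨⟨fun K hK' => (hK K hK').1, h₁⟩, ⟨fun K hK' => (hK K hK').2, h₂⟩⟩
  · rintro ⟨⟨hK₁, h₁⟩, ⟨hK₂, h₂⟩⟩
    exact ⟨fun K hK => ⟨hK₁ K hK, hK₂ K hK⟩, h₁, h₂⟩

theorem isBounded_preimage_of_dist_le {x0 : X} {y0 : Y} {f : X → Y} {A B : ℝ≥0}
    (hproper : ∀ x, dist x x0 ≤ A * dist (f x) y0 + B) {S : Set Y} (hS : IsBounded S) :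
    IsBounded (f ⁻¹' S) := by
  obtain ⟨R, hR⟩ := (Metric.isBounded_iff_subset_closedBall y0).mp hS
  refine Metric.isBounded_closedBall (x := x0) (r := A * R + B) |>.subset fun x hx => ?_
  have hfx : dist (f x) y0 ≤ R := hR hx
  rw [Metric.mem_closedBall]
  nlinarith [hproper x, A.2]

theorem SubControlledOneSided.image_prodMap {x0 : X} {y0 : Y} {f : X → Y} {K A B : ℝ≥0}
    (hf : LipschitzWith K f) (hf0 : f x0 = y0)
    (hproper : ∀ x, dist x x0 ≤ A * dist (f x) y0 + B)
    {E : Set (X × X)} (hE : SubControlledOneSided x0 E) :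
    SubControlledOneSided y0 (Prod.map f f '' E) := by
  obtain ⟨hE_bdd, hE_lin⟩ := hE
  constructor
  · intro S hS
    refine (hf.isBounded_image (hE_bdd _ (isBounded_preimage_of_dist_le hproper hS))).subset ?_
    rintro _ ⟨_, hxS, ⟨a, b⟩, hab, heq⟩
    simp only [Prod.map_apply, Prod.mk.injEq] at heq
    obtain ⟨rfl, rfl⟩ := heq
    exact ⟨a, ⟨b, hxS, hab⟩, rfl⟩
  · intro ε hε
    obtain ⟨r, hr⟩ := hE_lin (ε / ((K + 1) * (A + 1))) (by positivity)
    refine ⟨max ((K + 1) * r) B, ?_⟩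
    rintro _ _ hx ⟨⟨a, b⟩, hab, heq⟩
    simp only [Prod.map_apply, Prod.mk.injEq] at heq
    obtain ⟨rfl, rfl⟩ := heq
    subst hf0
    set d := dist (f b) (f x0)
    have hfb : d ≤ K * dist b x0 := hf.dist_le_mul b x0
    have hb : r ≤ dist b x0 := by
      refine le_of_mul_le_mul_left ?_ (by positivity : (0 : ℝ) < K + 1)
      nlinarith [le_of_max_le_left hx, dist_nonneg (x := b) (y := x0)]
    calc dist (f a) (f b) ≤ K * dist a b := hf.dist_le_mul a b
      _ ≤ K * (ε / ((K + 1) * (A + 1)) * dist b x0) := by gcongr; exact hr b a hb hab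
      _ ≤ K * (ε / ((K + 1) * (A + 1)) * (A * d + B)) := by gcongr; exact hproper b
      _ ≤ K * (ε / ((K + 1) * (A + 1)) * ((A + 1) * d)) := by
          gcongr; linarith [le_of_max_le_right hx]
      _ = K / (K + 1) * (ε * d) := by field_simp
      _ ≤ ε * d := by
          refine mul_le_of_le_one_left (by positivity) ?_
          rw [div_le_one (by positivity)]
          linarith

theorem SubCoarseMap.of_lipschitzWith {x0 : X} {y0 : Y} {f : X → Y} {K A B : ℝ≥0}
    (hf : LipschitzWith K f) (hf0 : f x0 = y0)
    (hproper : ∀ x, dist x x0 ≤ A * dist (f x) y0 + B) :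
    SubCoarseMap x0 y0 f := by
  refine ⟨fun S hS => isBounded_preimage_of_dist_le hproper hS, fun E hE => ?_⟩
  rw [subControlled_iff] at hE ⊢
  have hswap : Prod.swap ⁻¹' (Prod.map f f '' E) = Prod.map f f '' (Prod.swap ⁻¹' E) := by
    rw [← Set.image_swap_eq_preimage_swap, ← Set.image_swap_eq_preimage_swap,
      Set.image_image, Set.image_image]
    rfl
  rw [hswap]
  exact ⟨hE.1.image_prodMap hf hf0 hproper, hE.2.image_prodMap hf hf0 hproper⟩

theorem subControlledOneSided_of_dist_le {y0 : Y} {E : Set (Y × Y)} {φ : ℝ → ℝ}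
    (hφ_mono : Monotone φ) (hφ : φ =o[atTop] id)
    (hE : ∀ a b, (a, b) ∈ E → dist a b ≤ φ (dist b y0)) :
    SubControlledOneSided y0 E := by
  constructor
  · intro S hS
    obtain ⟨R, hR⟩ := (Metric.isBounded_iff_subset_closedBall y0).mp hS
    refine Metric.isBounded_closedBall (x := y0) (r := R + φ R) |>.subset ?_
    rintro y ⟨x, hxS, hyx⟩
    have hx : dist x y0 ≤ R := hR hxS
    rw [Metric.mem_closedBall]
    linarith [dist_triangle y x y0, hE y x hyx, hφ_mono hx]
  · intro ε hε
    obtain ⟨r, hr⟩ := eventually_atTop.mp (hφ.def hε)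
    refine ⟨r, fun x y hx hyx => ?_⟩
    calc dist y x ≤ φ (dist x y0) := hE y x hyx
      _ ≤ ‖φ (dist x y0)‖ := Real.le_norm_self _
      _ ≤ ε * ‖dist x y0‖ := hr _ hx
      _ = ε * dist x y0 := by rw [Real.norm_of_nonneg dist_nonneg]

theorem subClose_of_dist_le {Z : Type*} {y0 : Y} {h₁ h₂ : Z → Y} {φ : ℝ → ℝ}
    (hφ_mono : Monotone φ) (hφ : φ =o[atTop] id)
    (h : ∀ z, dist (h₁ z) (h₂ z) ≤ φ (dist (h₁ z) y0) ∧
      dist (h₁ z) (h₂ z) ≤ φ (dist (h₂ z) y0)) :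
    SubClose y0 h₁ h₂ := by
  rw [SubClose, subControlled_iff]
  constructor <;> apply subControlledOneSided_of_dist_le hφ_mono hφ
  · rintro a b ⟨z, hz⟩
    simp only [Prod.mk.injEq] at hz
    rw [hz.1, hz.2]
    exact (h z).2
  · rintro a b ⟨z, hz⟩
    simp only [Prod.swap_prod_mk, Prod.mk.injEq] at hz
    rw [hz.1, hz.2, dist_comm]
    exact (h z).1

end SublinearCoarse

theorem Real.sqrt_isLittleO_id : Real.sqrt =o[atTop] id := by
  rw [isLittleO_iff_tendsto fun x hx => by rw [show x = 0 from hx, Real.sqrt_zero]]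
  exact (tendsto_inv_atTop_zero.comp tendsto_sqrt_atTop).congr fun x => Real.sqrt_div_self.symm

def Half.origin : Half := ⟨0, le_refl 0⟩

noncomputable def Parab.origin : Parab := parabIncl Half.origin

def parabRet (p : Parab) : Half := ⟨p.1 0, p.2.1⟩

@[simp]
theorem coe_parabRet (p : Parab) : (parabRet p).1 = p.1 0 := rfl

theorem Half.dist_origin (t : Half) : dist t Half.origin = t.1 := by
  change dist t.1 0 = t.1
  rw [Real.dist_0_eq_abs, abs_of_nonneg t.2]

@[simp]
theorem parabIncl_apply_zero (t : Half) : (parabIncl t).1 0 = t.1 := by simp [parabIncl]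

@[simp]
theorem parabIncl_apply_one (t : Half) : (parabIncl t).1 1 = 0 := by simp [parabIncl]

theorem isometry_parabIncl : Isometry parabIncl := by
  refine Isometry.of_dist_eq fun s t => ?_
  change dist (parabIncl s).1 (parabIncl t).1 = dist s.1 t.1
  simp [EuclideanSpace.dist_eq, Fin.sum_univ_two]

theorem parabRet_parabIncl (t : Half) : parabRet (parabIncl t) = t :=
  Subtype.ext (parabIncl_apply_zero t)

theorem lipschitzWith_parabRet : LipschitzWith 1 parabRet :=
  LipschitzWith.of_dist_le_mul fun p q => by
    rw [NNReal.coe_one, one_mul]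
    exact PiLp.dist_apply_le p.1 q.1 0

theorem dist_parabIncl_parabRet (p : Parab) : dist p (parabIncl (parabRet p)) = |p.1 1| := by
  change dist p.1 (parabIncl (parabRet p)).1 = _
  simp [EuclideanSpace.dist_eq, Fin.sum_univ_two, Real.sqrt_sq_eq_abs]

theorem dist_parabIncl_parabRet_le_sqrt (p : Parab) :
    dist p (parabIncl (parabRet p)) ≤ √(p.1 0) :=
  (dist_parabIncl_parabRet p).trans_le p.2.2

theorem dist_parabIncl_origin (t : Half) : dist (parabIncl t) Parab.origin = t.1 := by
  rw [Parab.origin, isometry_parabIncl.dist_eq, Half.dist_origin]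

theorem Parab.apply_zero_le_dist_origin (p : Parab) : p.1 0 ≤ dist p Parab.origin := by
  simpa [Parab.origin, parabRet_parabIncl, Half.dist_origin] using
    lipschitzWith_parabRet.dist_le_mul p Parab.origin

theorem Parab.dist_origin_le (p : Parab) :
    dist p Parab.origin ≤ 2 * dist (parabRet p) Half.origin + 1 := by
  have hsqrt : √(p.1 0) ≤ p.1 0 + 1 :=
    Real.sqrt_le_iff.mpr ⟨by linarith [p.2.1], by nlinarith [p.2.1]⟩
  calc dist p Parab.origin
      ≤ dist p (parabIncl (parabRet p)) + dist (parabIncl (parabRet p)) Parab.origin :=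
        dist_triangle _ _ _
    _ ≤ √(p.1 0) + p.1 0 := by
        rw [dist_parabIncl_origin]
        exact add_le_add_left (dist_parabIncl_parabRet_le_sqrt p) _
    _ ≤ 2 * dist (parabRet p) Half.origin + 1 := by
        rw [Half.dist_origin]
        change _ ≤ 2 * p.1 0 + 1
        linarith

/-- The example at the end of §3: the inclusion `i : [0,∞) → X = `parabolic
region, `i(x) = (x,0)`, is a coarse equivalence for the sublinear coarse
structures (basepoints `0` and `(0,0) = i 0`); in particular every point
`(x,y) ∈ X` satisfies `d((x,y), i(x)) ≤ √x ≤ √‖(x,y)‖`, so the displacement of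
the retraction `(x,y) ↦ (x,0)` is sublinear in the norm. -/
theorem parabola_coarse_equivalence :
    let z0 : Half := ⟨0, le_refl 0⟩
    let p0 : Parab := parabIncl z0
    -- `i` is a coarse morphism
    SubCoarseMap z0 p0 parabIncl ∧
    -- with a coarse inverse
    (∃ g : Parab → Half, SubCoarseMap p0 z0 g ∧
      SubClose p0 (parabIncl ∘ g) id ∧ SubClose z0 (g ∘ parabIncl) id) ∧
    -- displacement estimate
    (∀ p : Parab, dist p (parabIncl ⟨p.1 0, p.2.1⟩) ≤ Real.sqrt (p.1 0) ∧
      Real.sqrt (p.1 0) ≤ Real.sqrt (dist p p0)) := by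
  intro z0 p0
  have hsqrt_le (p : Parab) : √(p.1 0) ≤ √(dist p p0) :=
    Real.sqrt_le_sqrt (Parab.apply_zero_le_dist_origin p)
  refine ⟨?incl, ⟨parabRet, ?ret, ?incl_ret, ?ret_incl⟩,
    fun p => ⟨dist_parabIncl_parabRet_le_sqrt p, hsqrt_le p⟩⟩
  case incl =>
    exact SubCoarseMap.of_lipschitzWith (A := 1) (B := 0) isometry_parabIncl.lipschitz rfl
      fun t => by simp [p0, isometry_parabIncl.dist_eq]
  case ret =>
    exact SubCoarseMap.of_lipschitzWith (A := 2) (B := 1) lipschitzWith_parabRet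
      (parabRet_parabIncl _) Parab.dist_origin_le
  case incl_ret =>
    refine subClose_of_dist_le Real.sqrt_monotone Real.sqrt_isLittleO_id fun p => ?_
    have hdist : dist (parabIncl (parabRet p)) p ≤ √(p.1 0) := by
      rw [dist_comm]; exact dist_parabIncl_parabRet_le_sqrt p
    have hnorm : dist (parabIncl (parabRet p)) p0 = p.1 0 := dist_parabIncl_origin _
    exact ⟨hnorm ▸ hdist, hdist.trans (hsqrt_le p)⟩
  case ret_incl =>
    refine subClose_of_dist_le monotone_const (isLittleO_zero _ _) fun t => ?_
    simp [parabRet_parabIncl]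
end
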